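/- arXiv:1803.08470 — 5 statements merged into one kernel-verified Lean document; each statement's English description precedes it below -/
import Mathlib

section
/- Let p, k be real numbers with p > k + 1 and let c₁, c₂ > 0. Let T ∈ (0, ∞] and let y : [0, T) → ℝ be differentiable with y(t) > 0 for all t, satisfying y'(t) ≤ y(t)(c₁ y(t)^{1+k-p} − c₂) for all t ∈ [0, T). Then for every t ∈ [0, T), y(t) ≤ max(y(0), (c₁/c₂)^{1/(p-k-1)}). -/
open scoped ENNReal

open Set

/-- **ODE comparison for the upper bound on `h_max` (Remark 3).** If `p > k+1`, `y > 0` is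
differentiable on `[0,T)` with `y' ≤ y (c₁ y^{1+k-p} − c₂)`, then
`y(t) ≤ max (y 0) ((c₁/c₂)^{1/(p-k-1)})` on `[0,T)`. -/
theorem stmt_2 (p k : ℝ) (hpk : k + 1 < p) (c₁ c₂ : ℝ) (hc₁ : 0 < c₁) (hc₂ : 0 < c₂)
    (T : ℝ≥0∞) (hT : 0 < T) (y y' : ℝ → ℝ)
    (hpos : ∀ t : ℝ, 0 ≤ t → ENNReal.ofReal t < T → 0 < y t)
    (hderiv : ∀ t : ℝ, 0 ≤ t → ENNReal.ofReal t < T →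
      HasDerivWithinAt y (y' t) {s : ℝ | 0 ≤ s ∧ ENNReal.ofReal s < T} t)
    (hineq : ∀ t : ℝ, 0 ≤ t → ENNReal.ofReal t < T →
      y' t ≤ y t * (c₁ * y t ^ (1 + k - p) - c₂)) :
    ∀ t : ℝ, 0 ≤ t → ENNReal.ofReal t < T →
      y t ≤ max (y 0) ((c₁ / c₂) ^ (1 / (p - k - 1))) := by
  intro t ht0 htT
  set B : ℝ := (c₁ / c₂) ^ (1 / (p - k - 1)) with hBdef
  set M : ℝ := max (y 0) B with hMdef
  have hBpos : 0 < B := Real.rpow_pos_of_pos (div_pos hc₁ hc₂) _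
  have hpk' : p - k - 1 ≠ 0 := by linarith
  have hBexp : B ^ (1 + k - p) = c₂ / c₁ := by
    rw [hBdef, ← Real.rpow_mul (le_of_lt (div_pos hc₁ hc₂))]
    have : 1 / (p - k - 1) * (1 + k - p) = -1 := by field_simp; ring
    rw [this, Real.rpow_neg_one, inv_div]
  -- the domain set
  set S : Set ℝ := {s : ℝ | 0 ≤ s ∧ ENNReal.ofReal s < T} with hSdef
  have hUopen : IsOpen {s : ℝ | ENNReal.ofReal s < T} :=
    isOpen_Iio.preimage ENNReal.continuous_ofReal
  have hsub : Icc 0 t ⊆ S := by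
    intro x hx
    exact ⟨hx.1, lt_of_le_of_lt (ENNReal.ofReal_le_ofReal hx.2) htT⟩
  have hcont : ContinuousOn y (Icc 0 t) := fun x hx =>
    ((hderiv x (hsub hx).1 (hsub hx).2).mono hsub).continuousWithinAt
  have hf' : ∀ x ∈ Ico 0 t, HasDerivWithinAt y (y' x) (Ici x) x := by
    intro x hx
    have hxS : x ∈ S := hsub ⟨hx.1, hx.2.le⟩
    refine (hderiv x hxS.1 hxS.2).mono_of_mem_nhdsWithin ?_
    refine Filter.inter_mem ?_ ?_
    · exact Filter.mem_of_superset self_mem_nhdsWithin (fun s hs => le_trans hx.1 hs)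
    · exact mem_nhdsWithin_of_mem_nhds (hUopen.mem_nhds hxS.2)
  refine le_of_forall_pos_le_add ?_
  intro ε hε
  have key : ∀ ⦃x⦄, x ∈ Icc 0 t → y x ≤ M + ε := by
    refine image_le_of_deriv_right_lt_deriv_boundary (B := fun _ => M + ε)
      (B' := fun _ => 0) hcont hf' ?_ (fun x => hasDerivAt_const x (M + ε)) ?_
    · have : y 0 ≤ M := le_max_left _ _
      show y 0 ≤ M + ε
      linarith
    · intro x hx hyx
      have hxS : x ∈ S := hsub ⟨hx.1, hx.2.le⟩
      have hyB : B < y x := by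
        have : B ≤ M := le_max_right _ _
        rw [hyx]; linarith
      have hrp : y x ^ (1 + k - p) < B ^ (1 + k - p) :=
        Real.rpow_lt_rpow_of_neg hBpos hyB (by linarith)
      have h1 : c₁ * y x ^ (1 + k - p) - c₂ < 0 := by
        have := (mul_lt_mul_iff_right₀ hc₁).2 hrp
        rw [hBexp, mul_div_cancel₀ _ hc₁.ne'] at this
        linarith
      calc y' x ≤ y x * (c₁ * y x ^ (1 + k - p) - c₂) := hineq x hxS.1 hxS.2
        _ < 0 := mul_neg_of_pos_of_neg (hpos x hxS.1 hxS.2) h1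
  exact key ⟨ht0, le_refl t⟩
end

section
/- Let n > k ≥ 1 be integers and let h : ℝ → ℝ be twice continuously differentiable. For α ∈ ℝ set ζ̃₂(α) := h(α) cos α − h'(α) sin α. Then for every θ ∈ (−π/2, π/2): (n−k) ∫_θ^{π/2} sin α · [ C(n−1,k−1)(h''(α)+h(α)) ζ̃₂(α)^{k−1} cos^{n−k} α + C(n−1,k) ζ̃₂(α)^{k} cos^{n−1−k} α ] dα = C(n−1,k) ζ̃₂(θ)^{k} cos^{n−k} θ. -/
open Real

/-!
With `ζ̃₂ = h cos − h' sin` one has `ζ̃₂' = −(h'' + h) sin`, so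
`d/dα [ζ̃₂^k cos^m] = −sin α (k (h'' + h) ζ̃₂^{k−1} cos^m + m ζ̃₂^k cos^{m−1})`.
For `m = n − k` the absorption identity `(n − k) C(n−1,k−1) = k C(n−1,k)` turns `n − k` times the
integrand into `C(n−1,k)` times this derivative, and the boundary term at `π/2` vanishes
because `cos (π/2) = 0` and `m ≥ 1`.
-/

theorem Nat.choose_pred_mul_sub {n k : ℕ} (hk : 1 ≤ k) :
    (n - 1).choose (k - 1) * (n - k) = (n - 1).choose k * k := by
  obtain ⟨j, rfl⟩ := Nat.exists_eq_add_of_le' hk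
  rw [Nat.choose_succ_right_eq, Nat.add_sub_cancel]
  congr 1
  omega

theorem hasDerivAt_mul_cos_sub_deriv_mul_sin {h : ℝ → ℝ} {α : ℝ}
    (hd : DifferentiableAt ℝ h α) (hd' : DifferentiableAt ℝ (deriv h) α) :
    HasDerivAt (fun α => h α * cos α - deriv h α * sin α)
      (-((deriv (deriv h) α + h α) * sin α)) α := by
  refine ((hd.hasDerivAt.mul (hasDerivAt_cos α)).sub
    (hd'.hasDerivAt.mul (hasDerivAt_sin α))).congr_deriv ?_
  ring

theorem hasDerivAt_pow_mul_cos_pow {ζ : ℝ → ℝ} {ρ α : ℝ} (hζ : HasDerivAt ζ (-(ρ * sin α)) α)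
    (k m : ℕ) :
    HasDerivAt (fun α => ζ α ^ k * cos α ^ m)
      (-(sin α * (k * ρ * ζ α ^ (k - 1) * cos α ^ m + m * ζ α ^ k * cos α ^ (m - 1)))) α := by
  refine ((hζ.pow k).mul ((hasDerivAt_cos α).pow m)).congr_deriv ?_
  simp only [Pi.pow_apply]
  ring

theorem integral_sin_mul_eq_pow_mul_cos_pow {ζ ρ : ℝ → ℝ}
    (hζ : ∀ α, HasDerivAt ζ (-(ρ α * sin α)) α) (hρ : Continuous ρ) {k m : ℕ} (hm : m ≠ 0)
    (θ : ℝ) :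
    ∫ α in θ..(π / 2), sin α * (k * ρ α * ζ α ^ (k - 1) * cos α ^ m
        + m * ζ α ^ k * cos α ^ (m - 1)) = ζ θ ^ k * cos θ ^ m := by
  have hζc : Continuous ζ := continuous_iff_continuousAt.2 fun α => (hζ α).continuousAt
  have hFTC := intervalIntegral.integral_eq_sub_of_hasDerivAt
    (fun α _ => (hasDerivAt_pow_mul_cos_pow (hζ α) k m).neg)
    (Continuous.intervalIntegrable (by fun_prop) θ (π / 2))
  simp only [neg_neg, Pi.neg_apply] at hFTC
  rw [hFTC, cos_pi_div_two, zero_pow hm]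
  ring

theorem stmt_4_general (n k : ℕ) (hk : 1 ≤ k) (hkn : k < n)
    (h : ℝ → ℝ) (hh : ContDiff ℝ 2 h)
    (θ : ℝ) :
    ((n : ℝ) - k) * ∫ α in θ..(π / 2), Real.sin α *
        ((Nat.choose (n - 1) (k - 1) : ℝ) * (deriv (deriv h) α + h α) *
            (h α * Real.cos α - deriv h α * Real.sin α) ^ (k - 1) * Real.cos α ^ (n - k)
          + (Nat.choose (n - 1) k : ℝ) *
            (h α * Real.cos α - deriv h α * Real.sin α) ^ k * Real.cos α ^ (n - 1 - k)) =
      (Nat.choose (n - 1) k : ℝ) *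
        (h θ * Real.cos θ - deriv h θ * Real.sin θ) ^ k * Real.cos θ ^ (n - k) := by
  have hh' : ContDiff ℝ 1 (deriv h) := ((contDiff_succ_iff_deriv (n := 1)).mp hh).2.2
  have hζ (α : ℝ) := hasDerivAt_mul_cos_sub_deriv_mul_sin (hh.differentiable (by norm_num) α)
    (hh'.differentiable one_ne_zero α)
  have hρ : Continuous fun α => deriv (deriv h) α + h α :=
    (hh'.continuous_deriv le_rfl).add hh.continuous
  have hchoose : ((n : ℝ) - k) * (n - 1).choose (k - 1) = k * (n - 1).choose k := by
    have := congrArg (Nat.cast (R := ℝ)) (Nat.choose_pred_mul_sub (n := n) hk)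
    push_cast [Nat.cast_sub hkn.le] at this
    linarith
  rw [← intervalIntegral.integral_const_mul, show n - 1 - k = n - k - 1 by omega]
  calc _ = ∫ α in θ..(π / 2), ((n - 1).choose k : ℝ) * (sin α *
          (k * (deriv (deriv h) α + h α) * (h α * cos α - deriv h α * sin α) ^ (k - 1)
              * cos α ^ (n - k)
            + (n - k : ℕ) * (h α * cos α - deriv h α * sin α) ^ k * cos α ^ (n - k - 1))) := by
        refine intervalIntegral.integral_congr fun α _ => ?_
        rw [Nat.cast_sub hkn.le]
        linear_combination sin α * (deriv (deriv h) α + h α)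
          * (h α * cos α - deriv h α * sin α) ^ (k - 1) * cos α ^ (n - k) * hchoose
    _ = _ := by
        rw [intervalIntegral.integral_const_mul,
          integral_sin_mul_eq_pow_mul_cos_pow hζ hρ (by omega), mul_assoc]

/-- **Firey's integral identity (Section 1).** For a rotationally symmetric hypersurface with
support function `h(θ)` and `ζ̃₂(α) = h(α) cos α − h'(α) sin α`, for `n > k ≥ 1` and
`θ ∈ (−π/2, π/2)`:
`(n−k) ∫_θ^{π/2} sin α [ C(n−1,k−1)(h''+h) ζ̃₂^{k−1} cos^{n−k} α + C(n−1,k) ζ̃₂^k cos^{n−1−k} α ] dα`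
`= C(n−1,k) ζ̃₂(θ)^k cos^{n−k} θ`. -/
theorem stmt_4 (n k : ℕ) (hk : 1 ≤ k) (hkn : k < n)
    (h : ℝ → ℝ) (hh : ContDiff ℝ 2 h)
    (θ : ℝ) (hθ : θ ∈ Set.Ioo (-(π / 2)) (π / 2)) :
    ((n : ℝ) - k) * ∫ α in θ..(π / 2), Real.sin α *
        ((Nat.choose (n - 1) (k - 1) : ℝ) * (deriv (deriv h) α + h α) *
            (h α * Real.cos α - deriv h α * Real.sin α) ^ (k - 1) * Real.cos α ^ (n - k)
          + (Nat.choose (n - 1) k : ℝ) *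
            (h α * Real.cos α - deriv h α * Real.sin α) ^ k * Real.cos α ^ (n - 1 - k)) =
      (Nat.choose (n - 1) k : ℝ) *
        (h θ * Real.cos θ - deriv h θ * Real.sin θ) ^ k * Real.cos θ ^ (n - k) :=
  stmt_4_general n k hk hkn h hh θ
end

section
/- Let 1 ≤ k ≤ n be integers and let σ_k(λ) := e_k(λ)/C(n,k) denote the normalized k-th elementary symmetric polynomial of λ = (λ₁, …, λ_n), where e_k is the k-th elementary symmetric polynomial and C(n,k) the binomial coefficient, so that σ_k(1,…,1) = 1. Then for every λ ∈ ℝⁿ with all entries strictly positive: Σ_{i=1}^{n} λ_i² ∂σ_k/∂λ_i (λ) ≥ k σ_k(λ)^{(k+1)/k}. -/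
/-!
Write `σ_k(λ)` as the mean of the monomials `∏_{i ∈ A} λᵢ` over the `k`-subsets `A`. The operator
`∑ᵢ λᵢ² ∂ᵢ` is the derivative in the direction `λ²`, and it sends `∏_A λ` to `(∑_A λ) ∏_A λ`.
By AM-GM, `∑_A λ ≥ k (∏_A λ)^{1/k}`, so each such term is at least `k (∏_A λ)^{(k+1)/k}`; since
`t ↦ t^{(k+1)/k}` is convex, the mean of these powers dominates `σ_k(λ)^{(k+1)/k}`.
-/

open Finset

section

variable {ι : Type*}

theorem ContinuousLinearMap.sum_mul_apply_single [Fintype ι] [DecidableEq ι]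
    (L : (ι → ℝ) →L[ℝ] ℝ) (v : ι → ℝ) : ∑ i, v i * L (Pi.single i 1) = L v := by
  conv_rhs => rw [← Finset.univ_sum_single v, map_sum]
  refine sum_congr rfl fun i _ => ?_
  rw [← smul_eq_mul, ← L.map_smul, ← Pi.single_smul', smul_eq_mul, mul_one]

theorem hasFDerivAt_sum_prod [Fintype ι] [DecidableEq ι]
    (s : Finset (Finset ι)) (l : ι → ℝ) :
    HasFDerivAt (fun m : ι → ℝ => ∑ A ∈ s, ∏ j ∈ A, m j)
      (∑ A ∈ s, ∑ j ∈ A,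
        (∏ t ∈ A.erase j, l t) • (ContinuousLinearMap.proj j : (ι → ℝ) →L[ℝ] ℝ)) l := by
  apply HasFDerivAt.fun_sum
  exact fun _ _ => .finsetProd fun j _ => hasFDerivAt_apply j l

theorem sum_sq_mul_fderiv_sum_prod_div [Fintype ι] [DecidableEq ι]
    (s : Finset (Finset ι)) (c : ℝ) (l : ι → ℝ) :
    ∑ i, l i ^ 2 * fderiv ℝ (fun m : ι → ℝ => (∑ A ∈ s, ∏ j ∈ A, m j) / c) l (Pi.single i 1) =
      (∑ A ∈ s, (∑ i ∈ A, l i) * ∏ j ∈ A, l j) / c := by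
  have hderiv := ((hasFDerivAt_sum_prod s l).mul_const c⁻¹).fderiv
  simp only [← div_eq_mul_inv] at hderiv
  rw [ContinuousLinearMap.sum_mul_apply_single, hderiv]
  simp only [_root_.smul_apply, _root_.sum_apply, ContinuousLinearMap.proj_apply, smul_eq_mul]
  rw [inv_mul_eq_div]
  congr 1
  refine sum_congr rfl fun A _ => ?_
  rw [sum_mul]
  refine sum_congr rfl fun i hi => ?_
  rw [← mul_prod_erase A l hi]
  ring

theorem card_mul_prod_rpow_le_sum_mul_prod (A : Finset ι) {l : ι → ℝ}
    (hl : ∀ i ∈ A, 0 ≤ l i) :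
    (#A : ℝ) * (∏ i ∈ A, l i) ^ (((#A : ℝ) + 1) / #A) ≤ (∑ i ∈ A, l i) * ∏ i ∈ A, l i := by
  rcases A.eq_empty_or_nonempty with rfl | hA
  · simp
  have hcard : (0 : ℝ) < #A := by exact_mod_cast hA.card_pos
  have hprod : 0 ≤ ∏ i ∈ A, l i := prod_nonneg hl
  have amgm : (∏ i ∈ A, l i) ^ (#A : ℝ)⁻¹ ≤ (∑ i ∈ A, l i) / #A := by
    simpa [Real.finsetProd_rpow] using Real.geom_mean_le_arith_mean A (fun _ => 1) l
      (fun _ _ => zero_le_one) (by simpa using hcard) hl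
  have hexp : ((#A : ℝ) + 1) / #A = (#A : ℝ)⁻¹ + 1 := by field_simp; ring
  calc (#A : ℝ) * (∏ i ∈ A, l i) ^ (((#A : ℝ) + 1) / #A)
      = #A * (∏ i ∈ A, l i) ^ (#A : ℝ)⁻¹ * ∏ i ∈ A, l i := by
        rw [hexp, Real.rpow_add_one' hprod (by positivity), mul_assoc]
    _ ≤ #A * ((∑ i ∈ A, l i) / #A) * ∏ i ∈ A, l i := by gcongr
    _ = (∑ i ∈ A, l i) * ∏ i ∈ A, l i := by field_simp

theorem rpow_sum_div_card_le_sum_rpow_div_card {α : Type*} {s : Finset α} (hs : s.Nonempty)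
    {f : α → ℝ} (hf : ∀ a ∈ s, 0 ≤ f a) {p : ℝ} (hp : 1 ≤ p) :
    ((∑ a ∈ s, f a) / #s) ^ p ≤ (∑ a ∈ s, f a ^ p) / #s := by
  have hcard : (#s : ℝ) ≠ 0 := by exact_mod_cast hs.card_ne_zero
  have := Real.rpow_arith_mean_le_arith_mean_rpow s (fun _ => (#s : ℝ)⁻¹) f
    (fun _ _ => by positivity) (by simp [hcard]) hf hp
  rwa [← mul_sum, ← mul_sum, inv_mul_eq_div, inv_mul_eq_div] at this

theorem mul_rpow_mean_prod_le_mean_sum_mul_prod {s : Finset (Finset ι)}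
    (hs : s.Nonempty) {k : ℕ} (hk : 1 ≤ k) (hcard : ∀ A ∈ s, #A = k) {l : ι → ℝ}
    (hl : ∀ i, 0 ≤ l i) :
    (k : ℝ) * ((∑ A ∈ s, ∏ i ∈ A, l i) / #s) ^ (((k : ℝ) + 1) / k) ≤
      (∑ A ∈ s, (∑ i ∈ A, l i) * ∏ i ∈ A, l i) / #s := by
  have hexp : (1 : ℝ) ≤ ((k : ℝ) + 1) / k := by
    rw [le_div_iff₀ (by exact_mod_cast hk)]
    linarith
  calc (k : ℝ) * ((∑ A ∈ s, ∏ i ∈ A, l i) / #s) ^ (((k : ℝ) + 1) / k)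
      ≤ k * ((∑ A ∈ s, (∏ i ∈ A, l i) ^ (((k : ℝ) + 1) / k)) / #s) := by
        gcongr
        exact rpow_sum_div_card_le_sum_rpow_div_card hs (fun A _ => prod_nonneg fun i _ => hl i)
          hexp
    _ = (∑ A ∈ s, (#A : ℝ) * (∏ i ∈ A, l i) ^ (((#A : ℝ) + 1) / #A)) / #s := by
        rw [mul_div_assoc', mul_sum]
        congr 1
        exact sum_congr rfl fun A hA => by rw [hcard A hA]
    _ ≤ (∑ A ∈ s, (∑ i ∈ A, l i) * ∏ i ∈ A, l i) / #s := by
        gcongr ?_ / _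
        exact sum_le_sum fun A _ => card_mul_prod_rpow_le_sum_mul_prod A fun i _ => hl i

end

/-- **Inverse-concavity inequality (5) of the paper.** For the normalized `k`-th elementary
symmetric polynomial `σ_k(λ) = e_k(λ)/C(n,k)` and `λ` with positive entries,
`Σ_i λ_i² ∂σ_k/∂λ_i ≥ k σ_k(λ)^{(k+1)/k}`. -/
theorem stmt_10 (n k : ℕ) (hk : 1 ≤ k) (hkn : k ≤ n)
    (l : Fin n → ℝ) (hl : ∀ i, 0 < l i) :
    (k : ℝ) * ((∑ A ∈ powersetCard k (univ : Finset (Fin n)), ∏ i ∈ A, l i) /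
        (n.choose k : ℝ)) ^ (((k : ℝ) + 1) / k) ≤
      ∑ i, l i ^ 2 *
        fderiv ℝ
          (fun m : Fin n → ℝ =>
            (∑ A ∈ powersetCard k (univ : Finset (Fin n)), ∏ j ∈ A, m j) / (n.choose k : ℝ))
          l (Pi.single i 1) := by
  rw [sum_sq_mul_fderiv_sum_prod_div]
  have hs : (powersetCard k (univ : Finset (Fin n))).Nonempty :=
    powersetCard_nonempty.2 (by simpa using hkn)
  simpa using mul_rpow_mean_prod_le_mean_sum_mul_prod hs hk
    (fun A hA => (mem_powersetCard.1 hA).2) (fun i => (hl i).le)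
end

section
/- Let 1 ≤ k ≤ n be integers and let σ_k(λ) := e_k(λ)/C(n,k) denote the normalized k-th elementary symmetric polynomial of λ = (λ₁, …, λ_n), where e_k is the k-th elementary symmetric polynomial and C(n,k) the binomial coefficient, so that σ_k(1,…,1) = 1. Then for every λ ∈ ℝⁿ with all entries strictly positive: Σ_{l=1}^{n} ∂σ_k/∂λ_l (λ) ≥ k σ_k(λ)^{(k−1)/k}. -/
/-!
Since `∑ l ∂σ_k/∂λ_l = k σ_{k-1}`, the claim is Maclaurin's inequality
`σ_k ^ ((k - 1) / k) ≤ σ_{k-1}`. Replacing `∏ (X + λ_i)` by its derivative divided by its degree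
keeps the normalized elementary symmetric means `σ_m` (`m < n`) and, by Rolle's theorem, yields
again a polynomial `∏ (X + μ_j)` with `n - 1` nonnegative `μ_j`. This reduces the inequality to
the case `n = k`, where `σ_k = ∏ λ_i` and `σ_{k-1}` is the arithmetic mean of the `k` products
`∏_{j ≠ i} λ_j`, whose geometric mean is `(∏ λ_i) ^ ((k - 1) / k)`: it is AM-GM.
-/

open Finset Polynomial

theorem Finset.sum_powersetCard_succ_sum_erase {ι M : Type*} [AddCommMonoid M] [DecidableEq ι]
    (s : Finset ι) (k : ℕ) (g : Finset ι → M) :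
    ∑ A ∈ powersetCard (k + 1) s, ∑ j ∈ A, g (A.erase j) =
      (#s - k) • ∑ B ∈ powersetCard k s, g B := by
  have hcount : ∀ B ∈ powersetCard k s, (#s - k) • g B = ∑ _j ∈ s \ B, g B := fun B hB => by
    rw [sum_const, card_sdiff_of_subset (mem_powersetCard.1 hB).1, (mem_powersetCard.1 hB).2]
  rw [smul_sum, sum_congr rfl hcount, sum_sigma', sum_sigma']
  refine sum_nbij' (fun p => ⟨p.1.erase p.2, p.2⟩) (fun p => ⟨insert p.2 p.1, p.2⟩)
    ?_ ?_ ?_ ?_ fun _ _ => rfl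
  · rintro ⟨A, j⟩ h
    simp only [mem_sigma, mem_powersetCard, mem_sdiff] at h ⊢
    exact ⟨⟨(erase_subset _ _).trans h.1.1, by rw [card_erase_of_mem h.2, h.1.2]; rfl⟩,
      h.1.1 h.2, notMem_erase _ _⟩
  · rintro ⟨B, j⟩ h
    simp only [mem_sigma, mem_powersetCard, mem_sdiff] at h ⊢
    exact ⟨⟨insert_subset h.2.1 h.1.1, by rw [card_insert_of_notMem h.2.2, h.1.2]⟩,
      mem_insert_self _ _⟩
  · rintro ⟨A, j⟩ h
    simp [insert_erase (mem_sigma.1 h).2]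
  · rintro ⟨B, j⟩ h
    simp [erase_insert (mem_sdiff.1 (mem_sigma.1 h).2).2]

theorem Finset.prod_prod_erase {ι R : Type*} [CommMonoid R] [DecidableEq ι]
    (t : Finset ι) (f : ι → R) :
    ∏ j ∈ t, ∏ i ∈ t.erase j, f i = (∏ i ∈ t, f i) ^ (#t - 1) := by
  rw [prod_comm' (t' := t) (s' := t.erase) (by intro j i; simp only [mem_erase]; tauto),
    ← prod_pow]
  exact prod_congr rfl fun i hi => by rw [prod_const, card_erase_of_mem hi]

theorem Real.prod_rpow_le_sum_prod_erase_div_card {ι : Type*} [DecidableEq ι] {t : Finset ι}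
    (ht : t.Nonempty) {f : ι → ℝ} (hf : ∀ i ∈ t, 0 ≤ f i) :
    (∏ i ∈ t, f i) ^ (((#t : ℝ) - 1) / #t) ≤ (∑ j ∈ t, ∏ i ∈ t.erase j, f i) / #t := by
  have amgm := Real.geom_mean_le_arith_mean t (fun _ => 1) (fun j => ∏ i ∈ t.erase j, f i)
    (fun _ _ => zero_le_one) (by simpa using ht)
    (fun _ _ => prod_nonneg fun i hi => hf i (mem_of_mem_erase hi))
  simp only [Real.rpow_one, one_mul, sum_const, nsmul_one, prod_prod_erase] at amgm
  rwa [← Real.rpow_natCast, ← Real.rpow_mul (prod_nonneg hf), Nat.cast_sub (card_pos.2 ht),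
    Nat.cast_one, ← div_eq_mul_inv] at amgm

theorem sum_fderiv_sum_prod_div_apply_single {ι : Type*} [Fintype ι] [DecidableEq ι]
    (S : Finset (Finset ι)) (c : ℝ) (l : ι → ℝ) :
    ∑ i, fderiv ℝ (fun m : ι → ℝ => (∑ A ∈ S, ∏ j ∈ A, m j) / c) l (Pi.single i 1) =
      (∑ A ∈ S, ∑ i ∈ A, ∏ j ∈ A.erase i, l j) / c := by
  have hderiv : HasFDerivAt (fun m : ι → ℝ => (∑ A ∈ S, ∏ j ∈ A, m j) / c)
      (c⁻¹ • ∑ A ∈ S, ∑ i ∈ A,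
        (∏ j ∈ A.erase i, l j) • ContinuousLinearMap.proj (R := ℝ) (φ := fun _ : ι => ℝ) i) l := by
    simpa only [div_eq_inv_mul] using
      (HasFDerivAt.fun_sum fun A _ => hasFDerivAt_finsetProd).const_mul c⁻¹
  rw [← map_sum, univ_sum_single (fun _ => (1 : ℝ)), hderiv.fderiv]
  simp [div_eq_inv_mul]

namespace Multiset

theorem exists_eq_map_univ {α : Type*} {s : Multiset α} {n : ℕ} (hs : card s = n) :
    ∃ f : Fin n → α, s = univ.val.map f := by
  obtain ⟨l, rfl⟩ : ∃ l : List α, (l : Multiset α) = s := Quotient.exists_rep s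
  rw [coe_card] at hs
  subst hs
  exact ⟨l.get, by rw [Fin.univ_val_map, List.ofFn_get]⟩

/-- The paper's normalized elementary symmetric function `σ_m`. -/
noncomputable def esymmMean (s : Multiset ℝ) (m : ℕ) : ℝ := s.esymm m / (card s).choose m

theorem esymmMean_eq_of_derivative_prod_eq {s t : Multiset ℝ} {n : ℕ} (hs : card s = n + 1)
    (ht : card t = n)
    (h : derivative (s.map (X + C ·)).prod = C ((n : ℝ) + 1) * (t.map (X + C ·)).prod)
    {m : ℕ} (hm : m ≤ n) : s.esymmMean m = t.esymmMean m := by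
  have hcoeff := congrArg (coeff · (n - m)) h
  simp only [coeff_derivative, coeff_C_mul] at hcoeff
  rw [prod_X_add_C_coeff s (by omega), prod_X_add_C_coeff t (by omega), hs, ht,
    (by omega : n + 1 - (n - m + 1) = m), (by omega : n - (n - m) = m)] at hcoeff
  have hchoose : (n.choose m : ℝ) * (n + 1) = (n + 1).choose m * ((n - m : ℕ) + 1) := by
    exact_mod_cast (by rw [Nat.choose_mul_succ_eq]; congr 1; omega :
      n.choose m * (n + 1) = (n + 1).choose m * ((n - m) + 1))
  have hpos : (0 : ℝ) < (n + 1).choose m := by exact_mod_cast Nat.choose_pos (by omega)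
  have hpos' : (0 : ℝ) < n.choose m := by exact_mod_cast Nat.choose_pos hm
  unfold esymmMean
  rw [hs, ht, div_eq_div_iff hpos.ne' hpos'.ne']
  refine mul_right_cancel₀ (n.cast_add_one_ne_zero (R := ℝ)) ?_
  linear_combination s.esymm m * hchoose + ((n + 1).choose m : ℝ) * hcoeff

theorem exists_derivative_prod_X_add_C_eq {s : Multiset ℝ} {n : ℕ} (hs : card s = n + 1)
    (hs0 : ∀ x ∈ s, 0 ≤ x) :
    ∃ t : Multiset ℝ, card t = n ∧ (∀ x ∈ t, 0 ≤ x) ∧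
      derivative (s.map (X + C ·)).prod = C ((n : ℝ) + 1) * (t.map (X + C ·)).prod := by
  classical
  set D := derivative (s.map (X + C ·)).prod
  have hQ : (s.map (X + C ·)).prod = ((s.map (- ·)).map (X - C ·)).prod := by
    simp [map_map, sub_eq_add_neg]
  have hdeg : D.natDegree = n := by
    simp [D, hQ, natDegree_multiset_prod_X_sub_C_eq_card, hs]
  have hroots : card D.roots = D.natDegree := by
    refine le_antisymm (card_roots' D) ?_
    have := card_roots_le_derivative ((s.map (- ·)).map (X - C ·)).prod
    rw [roots_multiset_prod_X_sub_C, card_map, hs, ← hQ] at this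
    exact hdeg ▸ Nat.le_of_succ_le_succ this
  have hlead : D.leadingCoeff = n + 1 := by
    rw [leadingCoeff, hdeg, coeff_derivative, prod_X_add_C_coeff s (by omega), hs, Nat.sub_self]
    simp [esymm]
  have heval : ∀ x : ℝ, 0 < x → 0 < D.eval x := by
    intro x hx
    simp only [D, derivative_prod, derivative_X_add_C, mul_one, eval_multisetSum,
      eval_multiset_prod, map_map, Function.comp_def, eval_add, eval_X, eval_C]
    have hne : s ≠ 0 := fun h => by simp [h] at hs
    simpa using sum_lt_sum_of_nonempty (f := fun _ => (0 : ℝ)) hne fun a _ =>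
      prod_pos fun y hy => by
        obtain ⟨b, hb, rfl⟩ := mem_map.1 hy
        linarith [hs0 b (mem_of_mem_erase hb)]
  refine ⟨D.roots.map (- ·), by rw [card_map, hroots, hdeg], ?_, ?_⟩
  · simp only [mem_map]
    rintro _ ⟨r, hr, rfl⟩
    by_contra! hneg
    have hD : D ≠ 0 := leadingCoeff_ne_zero.1 (by rw [hlead]; positivity)
    exact (heval r (by linarith)).ne' ((mem_roots hD).1 hr)
  · conv_lhs => rw [← C_leadingCoeff_mul_prod_multiset_X_sub_C hroots]
    simp [hlead, map_map, sub_eq_add_neg]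

theorem esymmMean_succ_rpow_le_of_card_eq {s : Multiset ℝ} {k : ℕ} (hs : card s = k + 1)
    (hs0 : ∀ x ∈ s, 0 ≤ x) :
    s.esymmMean (k + 1) ^ ((k : ℝ) / (k + 1)) ≤ s.esymmMean k := by
  obtain ⟨f, rfl⟩ := exists_eq_map_univ hs
  have huniv : Finset.powersetCard (k + 1) (univ : Finset (Fin (k + 1))) = {univ} := by
    simpa using Finset.powersetCard_self (univ : Finset (Fin (k + 1)))
  have hsum := sum_powersetCard_succ_sum_erase univ k (fun B => ∏ i ∈ B, f i)
  rw [huniv, Finset.sum_singleton, Finset.card_univ, Fintype.card_fin, Nat.add_sub_cancel_left,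
    one_smul] at hsum
  simp only [esymmMean, hs, esymm_map_val, huniv, Finset.sum_singleton, Nat.choose_self,
    Nat.cast_one, div_one, Nat.choose_succ_self_right, ← hsum]
  simpa using Real.prod_rpow_le_sum_prod_erase_div_card univ_nonempty
    fun i _ => hs0 _ (mem_map_of_mem f (mem_univ_val i))

theorem esymmMean_succ_rpow_le {s : Multiset ℝ} (hs0 : ∀ x ∈ s, 0 ≤ x) {k : ℕ}
    (hk : k + 1 ≤ card s) :
    s.esymmMean (k + 1) ^ ((k : ℝ) / (k + 1)) ≤ s.esymmMean k := by
  obtain ⟨n, hn⟩ : ∃ n, card s = n := ⟨_, rfl⟩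
  rw [hn] at hk
  induction n, hk using Nat.le_induction generalizing s with
  | base => exact esymmMean_succ_rpow_le_of_card_eq hn hs0
  | succ n hkn ih =>
    obtain ⟨t, ht, ht0, hD⟩ := exists_derivative_prod_X_add_C_eq hn hs0
    rw [esymmMean_eq_of_derivative_prod_eq hn ht hD hkn,
      esymmMean_eq_of_derivative_prod_eq hn ht hD (by omega)]
    exact ih ht0 ht

end Multiset

/-- **Maclaurin-type inequality (Lemma 2.5, case `p = k+1`).** For the normalized `k`-th
elementary symmetric polynomial `σ_k(λ) = e_k(λ)/C(n,k)` and `λ` with positive entries,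
`Σ_l ∂σ_k/∂λ_l ≥ k σ_k(λ)^{(k−1)/k}`. -/
theorem stmt_11 (n k : ℕ) (hk : 1 ≤ k) (hkn : k ≤ n)
    (l : Fin n → ℝ) (hl : ∀ i, 0 < l i) :
    (k : ℝ) * ((∑ A ∈ powersetCard k (univ : Finset (Fin n)), ∏ i ∈ A, l i) /
        (n.choose k : ℝ)) ^ (((k : ℝ) - 1) / k) ≤
      ∑ i : Fin n,
        fderiv ℝ
          (fun m : Fin n → ℝ =>
            (∑ A ∈ powersetCard k (univ : Finset (Fin n)), ∏ j ∈ A, m j) / (n.choose k : ℝ))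
          l (Pi.single i 1) := by
  obtain ⟨k, rfl⟩ : ∃ j, k = j + 1 := ⟨k - 1, by omega⟩
  set s := univ.val.map l
  have hs : Multiset.card s = n := by simp [s]
  have hσ : ∀ m, (∑ A ∈ powersetCard m univ, ∏ i ∈ A, l i) / (n.choose m : ℝ) = s.esymmMean m :=
    fun m => by rw [Multiset.esymmMean, hs, esymm_map_val]
  have hchoose : ((n - k : ℕ) : ℝ) / n.choose (k + 1) = (k + 1) / n.choose k := by
    rw [div_eq_div_iff (by exact_mod_cast (Nat.choose_pos hkn).ne')
      (by exact_mod_cast (Nat.choose_pos (by omega)).ne')]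
    have h := congrArg (Nat.cast : ℕ → ℝ) (Nat.choose_succ_right_eq n k)
    push_cast at h
    linear_combination -h
  rw [sum_fderiv_sum_prod_div_apply_single,
    sum_powersetCard_succ_sum_erase univ k (fun B => ∏ i ∈ B, l i), card_univ, Fintype.card_fin,
    nsmul_eq_mul, mul_div_right_comm, hchoose, div_mul_eq_mul_div, mul_div_assoc, hσ, hσ]
  push_cast
  rw [add_sub_cancel_right]
  gcongr
  exact Multiset.esymmMean_succ_rpow_le (by simpa [s] using fun i => (hl i).le) (by omega)
end

section
/- Let k ≥ 1 be an integer, p, a, b ∈ ℝ, and let h, φ : ℝ → ℝ be such that, on some open neighborhood of 0: h is twice differentiable with h''(θ) + h(θ) = 0, h > 0, h'(0) = 0; and φ is twice differentiable at 0 with φ > 0 and φ'(0) = 0. Define, on a neighborhood of 0, G(θ) := φ(θ) h(θ)^{2−p} [ a (h''(θ) + h(θ)) (h(θ) − h'(θ) tan θ)^{k−1} + b (h(θ) − h'(θ) tan θ)^{k} ]. Then G is twice differentiable at 0 and G''(0) + G(0) = b · h(0)^{2+k−p} · ( φ''(0) + (p + k − 1) φ(0) ). -/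
/-!
Near `0` the equation `h'' + h = 0` with `h'(0) = 0` forces `h = h(0) cos θ` (the energy
`(h - h(0) cos)² + (h' + h(0) sin)²` is constant), so the `a`-term of `G` vanishes and
`h - h' tan θ = h(0) / cos θ`. Hence `G = b h(0)^{2+k-p} φ cos^q` with `q = 2 - p - k`, and
since `(cos^q)'(0) = 0`, `(cos^q)''(0) = -q`, the product rule gives
`G''(0) + G(0) = b h(0)^{2+k-p} (φ''(0) + (1 - q) φ(0))`.
-/

open Real Filter Topology

lemma eq_mul_cos_add_mul_sin_of_hasDerivAt {s : Set ℝ} (hs : IsOpen s) (hs' : IsPreconnected s)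
    (hs0 : (0 : ℝ) ∈ s) {h h' : ℝ → ℝ} (hh : ∀ x ∈ s, HasDerivAt h (h' x) x)
    (hh' : ∀ x ∈ s, HasDerivAt h' (-h x) x) (x : ℝ) (hx : x ∈ s) :
    h x = h 0 * cos x + h' 0 * sin x ∧ h' x = -(h 0 * sin x) + h' 0 * cos x := by
  set u : ℝ → ℝ := fun x => h x - (h 0 * cos x + h' 0 * sin x)
  set v : ℝ → ℝ := fun x => h' x - (-(h 0 * sin x) + h' 0 * cos x)
  have hu : ∀ x ∈ s, HasDerivAt u (v x) x := fun x hx =>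
    ((hh x hx).sub (((hasDerivAt_cos x).const_mul _).add
      ((hasDerivAt_sin x).const_mul _))).congr_deriv (by ring)
  have hv : ∀ x ∈ s, HasDerivAt v (-u x) x := fun x hx =>
    ((hh' x hx).sub (((hasDerivAt_sin x).const_mul _).neg.add
      ((hasDerivAt_cos x).const_mul _))).congr_deriv (by ring)
  have henergy : ∀ x ∈ s, HasDerivAt (fun x => u x ^ 2 + v x ^ 2) 0 x := fun x hx =>
    (((hu x hx).pow 2).add ((hv x hx).pow 2)).congr_deriv (by push_cast; ring)
  have hconst : u x ^ 2 + v x ^ 2 = u 0 ^ 2 + v 0 ^ 2 :=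
    hs.is_const_of_deriv_eq_zero hs'
      (fun y hy => (henergy y hy).differentiableAt.differentiableWithinAt)
      (fun y hy => (henergy y hy).deriv) hx hs0
  have hu0 : u 0 = 0 := by simp [u]
  have hv0 : v 0 = 0 := by simp [v]
  rw [hu0, hv0] at hconst
  have hux : u x = 0 := by nlinarith [sq_nonneg (u x), sq_nonneg (v x)]
  have hvx : v x = 0 := by nlinarith [sq_nonneg (u x), sq_nonneg (v x)]
  exact ⟨sub_eq_zero.1 hux, sub_eq_zero.1 hvx⟩

lemma cos_add_sin_mul_tan {x : ℝ} (hx : cos x ≠ 0) : cos x + sin x * tan x = (cos x)⁻¹ := by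
  rw [tan_eq_sin_div_cos]
  field_simp
  linear_combination sin_sq_add_cos_sq x

lemma mul_rpow_mul_div_pow {c x : ℝ} (hc : 0 < c) (hx : 0 < x) (s : ℝ) (k : ℕ) :
    (c * x) ^ s * (c / x) ^ k = c ^ (s + k) * x ^ (s - k) := by
  rw [mul_rpow hc.le hx.le, div_pow, ← rpow_natCast, ← rpow_natCast, div_eq_mul_inv,
    ← rpow_neg hx.le, rpow_add hc, sub_eq_add_neg, rpow_add hx]
  ring

lemma eventually_cos_pos : ∀ᶠ x in 𝓝 (0 : ℝ), 0 < cos x :=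
  continuousAt_const.eventually_lt continuous_cos.continuousAt (by simp)

lemma hasDerivAt_deriv_mul_cos_rpow {φ : ℝ → ℝ} (hφ : ∀ᶠ x in 𝓝 0, DifferentiableAt ℝ φ x)
    (hφ' : DifferentiableAt ℝ (deriv φ) 0) (q : ℝ) :
    HasDerivAt (deriv fun x => φ x * cos x ^ q) (deriv (deriv φ) 0 - q * φ 0) 0 := by
  have hcos_rpow : ∀ x, 0 < cos x →
      HasDerivAt (fun x => cos x ^ q) (-sin x * q * cos x ^ (q - 1)) x := fun x hx =>
    (hasDerivAt_cos x).rpow_const (Or.inl hx.ne')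
  have hderiv : deriv (fun x => φ x * cos x ^ q) =ᶠ[𝓝 0]
      fun x => deriv φ x * cos x ^ q + φ x * (-sin x * q * cos x ^ (q - 1)) := by
    filter_upwards [hφ, eventually_cos_pos] with x hφx hcosx
    exact (hφx.hasDerivAt.mul (hcos_rpow x hcosx)).deriv
  have hsin_rpow : HasDerivAt (fun x => -sin x * q * cos x ^ (q - 1)) (-q) 0 :=
    ((((hasDerivAt_sin 0).neg).mul_const q).mul
      ((hasDerivAt_cos 0).rpow_const (Or.inl (by simp)))).congr_deriv (by simp)
  refine HasDerivAt.congr_of_eventuallyEq ?_ hderiv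
  exact ((hφ'.hasDerivAt.mul (hcos_rpow 0 (by simp))).add
    (hφ.self_of_nhds.hasDerivAt.mul hsin_rpow)).congr_deriv (by simp; ring)

theorem stmt_15_general (k : ℕ) (p a b : ℝ)
    (h φ : ℝ → ℝ) (U : Set ℝ) (hU : IsOpen U) (hU0 : (0 : ℝ) ∈ U)
    (hhpos : ∀ θ ∈ U, 0 < h θ)
    (hh1 : ∀ θ ∈ U, DifferentiableAt ℝ h θ)
    (hh2 : ∀ θ ∈ U, DifferentiableAt ℝ (deriv h) θ)
    (hode : ∀ θ ∈ U, deriv (deriv h) θ + h θ = 0)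
    (hh'0 : deriv h 0 = 0)
    (hφ1 : ∀ θ ∈ U, DifferentiableAt ℝ φ θ)
    (hφ2 : DifferentiableAt ℝ (deriv φ) 0) :
    let G : ℝ → ℝ := fun θ =>
      φ θ * h θ ^ (2 - p) *
        (a * (deriv (deriv h) θ + h θ) * (h θ - deriv h θ * Real.tan θ) ^ (k - 1)
          + b * (h θ - deriv h θ * Real.tan θ) ^ k)
    DifferentiableAt ℝ G 0 ∧ DifferentiableAt ℝ (deriv G) 0 ∧
      deriv (deriv G) 0 + G 0 =
        b * h 0 ^ (2 + (k : ℝ) - p) * (deriv (deriv φ) 0 + (p + k - 1) * φ 0) := by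
  intro G
  obtain ⟨r, hr, hrU⟩ := Metric.isOpen_iff.1 hU 0 hU0
  have hh_cos : ∀ θ ∈ Metric.ball 0 r, h θ = h 0 * cos θ ∧ deriv h θ = -(h 0 * sin θ) := by
    have hh'' : ∀ x ∈ Metric.ball 0 r, HasDerivAt (deriv h) (-h x) x := fun x hx =>
      (hh2 x (hrU hx)).hasDerivAt.congr_deriv (eq_neg_of_add_eq_zero_left (hode x (hrU hx)))
    intro θ hθ
    simpa [hh'0] using eq_mul_cos_add_mul_sin_of_hasDerivAt Metric.isOpen_ball
      (convex_ball 0 r).isPreconnected (Metric.mem_ball_self hr)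
      (fun x hx => (hh1 x (hrU hx)).hasDerivAt) hh'' θ hθ
  set B := b * h 0 ^ (2 + (k : ℝ) - p)
  set q := 2 - p - k
  have hGF : G =ᶠ[𝓝 0] fun θ => B * (φ θ * cos θ ^ q) := by
    filter_upwards [Metric.ball_mem_nhds 0 hr, eventually_cos_pos] with θ hθ hcos
    have hsupport : h θ - deriv h θ * tan θ = h 0 / cos θ := by
      rw [(hh_cos θ hθ).1, (hh_cos θ hθ).2, div_eq_mul_inv, ← cos_add_sin_mul_tan hcos.ne']
      ring
    simp only [G]
    rw [hode θ (hrU hθ), hsupport, (hh_cos θ hθ).1, mul_zero, zero_mul, zero_add, mul_assoc,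
      mul_left_comm _ b, mul_rpow_mul_div_pow (hhpos 0 hU0) hcos, show 2 - p + k = 2 + (k : ℝ) - p by ring]
    ring
  have hφev : ∀ᶠ θ in 𝓝 0, DifferentiableAt ℝ φ θ := eventually_of_mem (hU.mem_nhds hU0) hφ1
  have hF := (hasDerivAt_deriv_mul_cos_rpow hφev hφ2 q).const_mul B
  have hdG : deriv G =ᶠ[𝓝 0] fun θ => B * deriv (fun θ => φ θ * cos θ ^ q) θ := by
    simpa only [deriv_const_mul_field'] using hGF.deriv
  refine ⟨hGF.differentiableAt_iff.2 ?_, hdG.differentiableAt_iff.2 hF.differentiableAt, ?_⟩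
  · exact ((hφ1 0 hU0).mul ((differentiableAt_cos).rpow_const (Or.inl (by simp)))).const_mul B
  · rw [hdG.deriv_eq, hF.deriv, hGF.eq_of_nhds]
    simp only [cos_zero, one_rpow, mul_one, q]
    ring

/-- **The key computation in the loss-of-smoothness example (Section 4).** If near `0` we have
`h'' + h = 0`, `h > 0`, `h'(0) = 0`, `φ > 0`, `φ'(0) = 0`, then
`G = φ h^{2−p} (a (h''+h)(h − h' tan θ)^{k−1} + b (h − h' tan θ)^k)` is twice differentiable
at `0` and `G''(0) + G(0) = b h(0)^{2+k−p} (φ''(0) + (p+k−1) φ(0))`. -/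
theorem stmt_15 (k : ℕ) (hk : 1 ≤ k) (p a b : ℝ)
    (h φ : ℝ → ℝ) (U : Set ℝ) (hU : IsOpen U) (hU0 : (0 : ℝ) ∈ U)
    (hhpos : ∀ θ ∈ U, 0 < h θ)
    (hh1 : ∀ θ ∈ U, DifferentiableAt ℝ h θ)
    (hh2 : ∀ θ ∈ U, DifferentiableAt ℝ (deriv h) θ)
    (hode : ∀ θ ∈ U, deriv (deriv h) θ + h θ = 0)
    (hh'0 : deriv h 0 = 0)
    (hφpos : ∀ θ ∈ U, 0 < φ θ)
    (hφ1 : ∀ θ ∈ U, DifferentiableAt ℝ φ θ)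
    (hφ2 : DifferentiableAt ℝ (deriv φ) 0)
    (hφ'0 : deriv φ 0 = 0) :
    let G : ℝ → ℝ := fun θ =>
      φ θ * h θ ^ (2 - p) *
        (a * (deriv (deriv h) θ + h θ) * (h θ - deriv h θ * Real.tan θ) ^ (k - 1)
          + b * (h θ - deriv h θ * Real.tan θ) ^ k)
    DifferentiableAt ℝ G 0 ∧ DifferentiableAt ℝ (deriv G) 0 ∧
      deriv (deriv G) 0 + G 0 =
        b * h 0 ^ (2 + (k : ℝ) - p) * (deriv (deriv φ) 0 + (p + k - 1) * φ 0) :=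
  stmt_15_general k p a b h φ U hU hU0 hhpos hh1 hh2 hode hh'0 hφ1 hφ2
end
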